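/- arXiv:2001.09515 — 2 statements merged into one kernel-verified Lean document; each statement's English description precedes it below -/
import Mathlib

section
/- For every integer d ≥ 3, the 2d vectors |φ_{n,j}⟩ = (1/√2) Σ_{a=0}^{1} (−1)^{na} |a⟩⊗|(j+a mod (d−1))'⟩ for n∈{0,1}, j∈{0,1,…,d−2}, together with |φ_{n,d−1}⟩ = (1/√2)(|0⟩+(−1)^n|1⟩)⊗|(d−1)'⟩ for n∈{0,1}, form an orthonormal basis of C²⊗C^d. -/
noncomputable def phi (d : ℕ) (n : Fin 2) (m : Fin d) : EuclideanSpace ℂ (Fin 2 × Fin d) :=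
  WithLp.toLp 2 fun p : Fin 2 × Fin d =>
    (Real.sqrt 2 : ℂ)⁻¹ * (-1 : ℂ) ^ ((n : ℕ) * (p.1 : ℕ)) *
      (if (p.2 : ℕ) = (if (m : ℕ) = d - 1 then d - 1 else ((m : ℕ) + (p.1 : ℕ)) % (d - 1))
        then 1 else 0)

lemma conj_phi (d : ℕ) (n : Fin 2) (m : Fin d) (p : Fin 2 × Fin d) :
    (starRingEnd ℂ) (phi d n m p) = phi d n m p := by
  simp only [phi, WithLp.ofLp_toLp, map_mul, map_pow, map_inv₀, Complex.conj_ofReal, map_neg, map_one,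
    apply_ite, map_zero]
  split <;> simp

lemma key_sum (d : ℕ) (k1 k2 : ℕ) (hk1 : k1 < d) :
    (∑ b : Fin d, (if (b:ℕ) = k1 then (1:ℂ) else 0) * (if (b:ℕ) = k2 then 1 else 0))
      = if k1 = k2 then 1 else 0 := by
  rw [Finset.sum_eq_single (⟨k1, hk1⟩ : Fin d)]
  · simp
  · intro b _ hb
    have : (b:ℕ) ≠ k1 := fun h => hb (Fin.ext h)
    simp [this]
  · simp

def F (d : ℕ) (m : Fin d) (a : ℕ) : ℕ :=
  if (m:ℕ) = d - 1 then d - 1 else ((m:ℕ) + a) % (d - 1)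

lemma F_lt (d : ℕ) (hd : 3 ≤ d) (m : Fin d) (a : ℕ) : F d m a < d := by
  unfold F
  split
  · omega
  · exact lt_of_lt_of_le (Nat.mod_lt _ (by omega)) (by omega)

lemma inner_phi (d : ℕ) (hd : 3 ≤ d) (n1 n2 : Fin 2) (m1 m2 : Fin d) :
    (inner ℂ (phi d n1 m1) (phi d n2 m2) : ℂ) =
      2⁻¹ * ∑ a : Fin 2, (-1:ℂ) ^ ((n1:ℕ)*(a:ℕ) + (n2:ℕ)*(a:ℕ)) *
        (if F d m1 (a:ℕ) = F d m2 (a:ℕ) then 1 else 0) := by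
  have hsqrt : ((Real.sqrt 2 : ℂ))⁻¹ * (Real.sqrt 2 : ℂ)⁻¹ = 2⁻¹ := by
    rw [← mul_inv, ← Complex.ofReal_mul, Real.mul_self_sqrt (by norm_num)]
    norm_num
  rw [PiLp.inner_apply]
  simp only [RCLike.inner_apply', conj_phi]
  rw [Fintype.sum_prod_type, Finset.mul_sum]
  refine Finset.sum_congr rfl fun a _ => ?_
  have e1 : ∀ b : Fin d, phi d n1 m1 (a,b) * phi d n2 m2 (a,b)
      = ((Real.sqrt 2:ℂ)⁻¹ * (Real.sqrt 2:ℂ)⁻¹ *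
          ((-1:ℂ)^((n1:ℕ)*(a:ℕ)) * (-1:ℂ)^((n2:ℕ)*(a:ℕ)))) *
        ((if (b:ℕ) = F d m1 (a:ℕ) then (1:ℂ) else 0) *
          (if (b:ℕ) = F d m2 (a:ℕ) then 1 else 0)) := by
    intro b
    simp only [phi, WithLp.ofLp_toLp, F]
    ring
  rw [Finset.sum_congr rfl (fun b _ => e1 b), ← Finset.mul_sum,
    key_sum d _ _ (F_lt d hd m1 (a:ℕ)), hsqrt, ← pow_add]
  ring

lemma F_inj (d : ℕ) (hd : 3 ≤ d) (m1 m2 : Fin d) (a : ℕ) (h : F d m1 a = F d m2 a) :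
    m1 = m2 := by
  unfold F at h
  by_cases h1 : (m1:ℕ) = d - 1 <;> by_cases h2 : (m2:ℕ) = d - 1
  · exact Fin.ext (h1.trans h2.symm)
  · rw [if_pos h1, if_neg h2] at h
    have := Nat.mod_lt ((m2:ℕ)+a) (show 0 < d-1 by omega); omega
  · rw [if_neg h1, if_pos h2] at h
    have := Nat.mod_lt ((m1:ℕ)+a) (show 0 < d-1 by omega); omega
  · rw [if_neg h1, if_neg h2] at h
    have hm1 : (m1:ℕ) < d - 1 := by have := m1.isLt; omega
    have hm2 : (m2:ℕ) < d - 1 := by have := m2.isLt; omega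
    have := Nat.ModEq.add_right_cancel' a (h : _ ≡ _ [MOD d-1])
    exact Fin.ext (by rwa [Nat.ModEq, Nat.mod_eq_of_lt hm1, Nat.mod_eq_of_lt hm2] at this)

/-- For every `d ≥ 3`, the `2d` vectors `|φ_{n,m}⟩`, `n ∈ {0,1}`, `m ∈ {0,…,d-1}`, form an
orthonormal basis of `C² ⊗ C^d`: they are orthonormal and span the whole space. -/
theorem vectors_orthonormal_basis_general (d : ℕ) (hd : 3 ≤ d) :
    Orthonormal ℂ (fun nm : Fin 2 × Fin d => phi d nm.1 nm.2) ∧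
      Submodule.span ℂ (Set.range (fun nm : Fin 2 × Fin d => phi d nm.1 nm.2)) = ⊤ := by
  have horth : Orthonormal ℂ (fun nm : Fin 2 × Fin d => phi d nm.1 nm.2) := by
    rw [orthonormal_iff_ite]
    rintro ⟨n1, m1⟩ ⟨n2, m2⟩
    rw [inner_phi d hd, Fin.sum_univ_two]
    by_cases hm : m1 = m2
    · subst hm
      simp only [if_pos rfl]
      by_cases hn : n1 = n2
      · subst hn
        rw [if_pos rfl]
        fin_cases n1 <;> norm_num
      · have hne : (n1, m1) ≠ (n2, m1) := by simp [hn]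
        rw [if_neg hne]
        fin_cases n1 <;> fin_cases n2 <;> simp_all
    · have hF : ∀ a : ℕ, ¬ (F d m1 a = F d m2 a) := fun a h => hm (F_inj d hd m1 m2 a h)
      have hne : (n1, m1) ≠ (n2, m2) := by simp [hm]
      simp [hF, hne]
  refine ⟨horth, ?_⟩
  haveI : NeZero d := ⟨by omega⟩
  refine horth.linearIndependent.span_eq_top_of_card_eq_finrank ?_
  simp [finrank_euclideanSpace]
end

section
/- For every integer d ≥ 3, the 2(d−1) vectors |φ_{n,j}⟩ = (1/√2) Σ_{a=0}^{1} (−1)^{na} |a⟩⊗|(j+a mod (d−1))'⟩, n∈{0,1}, j∈{0,1,…,d−2}, form an orthonormal set in C²⊗C^d in which each vector is maximally entangled (its 2×d coefficient matrix M satisfies M M† = (1/2)·I₂), and the set is unextendible: every vector ψ∈C²⊗C^d orthogonal to all of them is of the form v⊗|(d−1)'⟩ for some v∈C², hence no unit vector orthogonal to all of them is maximally entangled. -/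
/-- The `2×d` coefficient matrix of a vector of `C² ⊗ C^d`. -/
noncomputable def coeffMat {d : ℕ} (ψ : EuclideanSpace ℂ (Fin 2 × Fin d)) :
    Matrix (Fin 2) (Fin d) ℂ :=
  Matrix.of fun a b => ψ (a, b)

lemma sum_ite_one_mul {d : ℕ} (p : ℕ) (hp : p < d) (f : Fin d → ℂ) :
    (∑ b : Fin d, (if (b : ℕ) = p then (1:ℂ) else 0) * f b) = f ⟨p, hp⟩ := by
  rw [Finset.sum_eq_single (⟨p, hp⟩ : Fin d)]
  · simp
  · intro b _ hb
    have : ¬ ((b : ℕ) = p) := fun h => hb (Fin.ext h)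
    simp [this]
  · simp
lemma phi_apply {d : ℕ} (hd : 3 ≤ d) (n : Fin 2) (j : Fin (d-1)) (a : Fin 2) (b : Fin d) :
    phi d n (Fin.castLE (Nat.sub_le d 1) j) (a, b) =
      (Real.sqrt 2 : ℂ)⁻¹ * (-1:ℂ)^((n:ℕ)*(a:ℕ)) *
        (if (b:ℕ) = ((j:ℕ)+(a:ℕ)) % (d-1) then 1 else 0) := by
  have hj : ¬ ((j : ℕ) = d - 1) := by have := j.isLt; omega
  simp [phi, hj]
lemma inner_phi_s12 {d : ℕ} (hd : 3 ≤ d) (n : Fin 2) (j : Fin (d-1))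
    (ψ : EuclideanSpace ℂ (Fin 2 × Fin d)) :
    (inner ℂ (phi d n (Fin.castLE (Nat.sub_le d 1) j)) ψ : ℂ) =
      (Real.sqrt 2 : ℂ)⁻¹ * ∑ a : Fin 2, (-1:ℂ)^((n:ℕ)*(a:ℕ)) *
        ψ (a, ⟨((j:ℕ)+(a:ℕ)) % (d-1),
          Nat.lt_of_lt_of_le (Nat.mod_lt _ (by omega)) (Nat.sub_le d 1)⟩) := by
  simp only [PiLp.inner_apply, RCLike.inner_apply, Fintype.sum_prod_type]
  rw [Finset.mul_sum]
  refine Finset.sum_congr rfl (fun a _ => ?_)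
  have key : ∀ b : Fin d, (starRingEnd ℂ) (phi d n (Fin.castLE (Nat.sub_le d 1) j) (a, b)) * ψ (a,b)
      = ((Real.sqrt 2 : ℂ)⁻¹ * (-1:ℂ)^((n:ℕ)*(a:ℕ))) *
        ((if (b:ℕ) = ((j:ℕ)+(a:ℕ)) % (d-1) then 1 else 0) * ψ (a,b)) := by
    intro b
    rw [phi_apply hd]
    simp only [map_mul, map_inv₀, Complex.conj_ofReal, map_pow, map_neg, map_one,
      apply_ite (starRingEnd ℂ), map_one, map_zero]
    ring
  simp only [mul_comm (ψ _), key]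
  rw [← Finset.mul_sum, sum_ite_one_mul _ (Nat.lt_of_lt_of_le (Nat.mod_lt _ (by omega)) (Nat.sub_le d 1))]
  ring
lemma mod_cancel {m j j' a : ℕ} (hj : j < m) (hj' : j' < m)
    (h : (j + a) % m = (j' + a) % m) : j = j' := by
  have h2 : j ≡ j' [MOD m] := Nat.ModEq.add_right_cancel' a h
  have : j % m = j' % m := h2
  rwa [Nat.mod_eq_of_lt hj, Nat.mod_eq_of_lt hj'] at this
lemma mod_succ_ne {m j : ℕ} (hm : 2 ≤ m) (hj : j < m) : j % m ≠ (j + 1) % m := by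
  rw [Nat.mod_eq_of_lt hj]
  by_cases h : j + 1 < m
  · rw [Nat.mod_eq_of_lt h]; omega
  · have : j + 1 = m := by omega
    rw [this, Nat.mod_self]; omega
lemma hc2 : ((Real.sqrt 2 : ℝ) : ℂ)⁻¹ * ((Real.sqrt 2 : ℝ) : ℂ)⁻¹ = 2⁻¹ := by
  rw [← mul_inv, ← Complex.ofReal_mul, Real.mul_self_sqrt (by norm_num)]
  norm_num
lemma neg_one_pow_sq (k : ℕ) : ((-1 : ℂ) ^ k) * ((-1:ℂ) ^ k) = 1 := by
  rw [← pow_add]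
  exact Even.neg_one_pow ⟨k, rfl⟩

/-- For every `d ≥ 3`, the `2(d-1)` vectors `|φ_{n,j}⟩`, `n ∈ {0,1}`, `j ∈ {0,…,d-2}`, form an
orthonormal set of maximally entangled vectors in `C² ⊗ C^d` which is unextendible: every
vector orthogonal to all of them is of the form `v ⊗ |(d-1)'⟩`, hence no unit vector
orthogonal to all of them is maximally entangled. -/
theorem umeb_general (d : ℕ) (hd : 3 ≤ d) :
    Orthonormal ℂ
      (fun nj : Fin 2 × Fin (d - 1) => phi d nj.1 (Fin.castLE (Nat.sub_le d 1) nj.2)) ∧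
    (∀ (n : Fin 2) (j : Fin (d - 1)),
      coeffMat (phi d n (Fin.castLE (Nat.sub_le d 1) j)) *
          (coeffMat (phi d n (Fin.castLE (Nat.sub_le d 1) j))).conjTranspose
        = ((1 : ℂ) / 2) • 1) ∧
    (∀ ψ : EuclideanSpace ℂ (Fin 2 × Fin d),
      (∀ (n : Fin 2) (j : Fin (d - 1)),
          (inner ℂ (phi d n (Fin.castLE (Nat.sub_le d 1) j)) ψ : ℂ) = 0) →
      (∃ v : Fin 2 → ℂ, ∀ (a : Fin 2) (b : Fin d),
          ψ (a, b) = if (b : ℕ) = d - 1 then v a else 0) ∧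
      (‖ψ‖ = 1 → coeffMat ψ * (coeffMat ψ).conjTranspose ≠ ((1 : ℂ) / 2) • 1)) := by
  refine ⟨?_, ?_, ?_⟩
  · rw [orthonormal_iff_ite]
    rintro ⟨n, j⟩ ⟨n', j'⟩
    rw [inner_phi_s12 hd]
    simp only [Fin.sum_univ_two, phi_apply hd]
    have key : ∀ a : ℕ, ((((j:ℕ)+a) % (d-1) = ((j':ℕ)+a) % (d-1)) ↔ j = j') := by
      intro a
      constructor
      · intro h; exact Fin.ext (mod_cancel j.isLt j'.isLt h)
      · rintro rfl; rfl
    simp only [Fin.val_zero, Fin.val_one, key 0, key 1, Prod.mk.injEq]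
    by_cases hj : j = j'
    · subst hj
      have h2 : ((Real.sqrt 2 : ℝ) : ℂ) ^ 2 = 2 := by
        rw [← Complex.ofReal_pow, Real.sq_sqrt (by norm_num)]; norm_num
      fin_cases n <;> fin_cases n' <;> simp_all <;> ring_nf <;>
        simp [h2]
    · simp [hj]
  · intro n j

    ext a a'
    rw [Matrix.mul_apply]
    simp only [Matrix.conjTranspose_apply, coeffMat, Matrix.of_apply, phi_apply hd,
      Complex.star_def, map_mul, map_inv₀, Complex.conj_ofReal, map_pow, map_neg, map_one,
      apply_ite (starRingEnd ℂ), map_one, map_zero]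
    have hlt : ∀ x : ℕ, ((j:ℕ) + x) % (d-1) < d :=
      fun x => Nat.lt_of_lt_of_le (Nat.mod_lt _ (by omega)) (Nat.sub_le d 1)
    rw [Finset.sum_eq_single (⟨((j:ℕ)+(a:ℕ)) % (d-1), hlt a⟩ : Fin d)]
    · by_cases haa : a = a'
      · subst haa
        simp only [if_pos rfl, if_true, mul_one]
        rw [Matrix.smul_apply, Matrix.one_apply_eq, smul_eq_mul, mul_one]
        have h1 := neg_one_pow_sq ((n:ℕ)*(a:ℕ))
        have h2 := hc2
        have key : ((Real.sqrt 2 : ℝ):ℂ)⁻¹ * ((Real.sqrt 2 : ℝ):ℂ)⁻¹ *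
            ((-1:ℂ)^((n:ℕ)*(a:ℕ)) * (-1:ℂ)^((n:ℕ)*(a:ℕ))) = 1/2 := by
          rw [h1, h2]; norm_num
        linear_combination key
      · have hm : 2 ≤ d - 1 := by omega
        have hb := mod_succ_ne hm j.isLt
        have hne : ¬ (((j:ℕ)+(a:ℕ)) % (d-1) = ((j:ℕ)+(a':ℕ)) % (d-1)) := by
          fin_cases a <;> fin_cases a' <;> simp_all <;>
            exact fun h => mod_succ_ne hm j.isLt h.symm
        simp [hne, Matrix.one_apply_ne haa]
    · intro b _ hb
      have : ¬ ((b:ℕ) = ((j:ℕ)+(a:ℕ)) % (d-1)) := fun h => hb (Fin.ext h)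
      simp [this]
    · simp
  · intro ψ hψ

    have hc : ((Real.sqrt 2 : ℝ) : ℂ)⁻¹ ≠ 0 := by
      simp [Real.sqrt_eq_zero']
    have hlt : ∀ j : Fin (d-1), ∀ x : ℕ, ((j:ℕ) + x) % (d-1) < d :=
      fun j x => Nat.lt_of_lt_of_le (Nat.mod_lt _ (by omega)) (Nat.sub_le d 1)
    -- extract the two linear relations
    have hrel : ∀ j : Fin (d-1),
        ψ (0, ⟨((j:ℕ)+0) % (d-1), hlt j 0⟩) = 0 ∧
        ψ (1, ⟨((j:ℕ)+1) % (d-1), hlt j 1⟩) = 0 := by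
      intro j
      have h0 := hψ 0 j
      have h1 := hψ 1 j
      rw [inner_phi_s12 hd] at h0 h1
      simp only [Fin.sum_univ_two, Fin.val_zero, Fin.val_one, Fin.isValue, pow_zero,
        Nat.mul_zero, Nat.zero_mul, Nat.mul_one, Nat.one_mul, pow_one, one_mul, neg_one_mul,
        mul_eq_zero, hc, false_or] at h0 h1
      constructor
      · have := add_eq_zero_iff_eq_neg.mp h0
        have := add_eq_zero_iff_eq_neg.mp h1
        linear_combination (h0 + h1) / 2
      · linear_combination (h0 - h1) / 2
    have hzero : ∀ (a : Fin 2) (b : Fin d), (b:ℕ) < d - 1 → ψ (a, b) = 0 := by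
      intro a b hb
      fin_cases a
      · have := (hrel ⟨(b:ℕ), hb⟩).1
        have he : (((b:ℕ) + 0) % (d-1)) = (b:ℕ) := by
          rw [Nat.add_zero, Nat.mod_eq_of_lt hb]
        have hb2 : (⟨((b:ℕ)+0) % (d-1), hlt ⟨(b:ℕ), hb⟩ 0⟩ : Fin d) = b := Fin.ext he
        rw [← hb2]; exact this
      · have hm : 0 < d - 1 := by omega
        set j : Fin (d-1) := ⟨((b:ℕ) + (d-1) - 1) % (d-1), Nat.mod_lt _ hm⟩ with hjdef
        have := (hrel j).2
        have he : (((j:ℕ) + 1) % (d-1)) = (b:ℕ) := by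
          show ((((b:ℕ) + (d-1) - 1) % (d-1)) + 1) % (d-1) = (b:ℕ)
          rw [Nat.mod_add_mod]
          have h3 : (b:ℕ) + (d-1) - 1 + 1 = (b:ℕ) + (d-1) := by omega
          rw [h3, Nat.add_mod_right, Nat.mod_eq_of_lt hb]
        have hb2 : (⟨((j:ℕ)+1) % (d-1), hlt j 1⟩ : Fin d) = b := Fin.ext he
        rw [← hb2]; exact this
    have hdlt : d - 1 < d := by omega
    set v : Fin 2 → ℂ := fun a => ψ (a, ⟨d-1, hdlt⟩) with hv
    have hform : ∀ (a : Fin 2) (b : Fin d), ψ (a, b) = if (b : ℕ) = d - 1 then v a else 0 := by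
      intro a b
      by_cases hb : (b:ℕ) = d - 1
      · rw [if_pos hb]
        have : b = ⟨d-1, hdlt⟩ := Fin.ext hb
        rw [this]
      · rw [if_neg hb]
        exact hzero a b (by omega)
    refine ⟨⟨v, hform⟩, ?_⟩
    intro _ hMM
    have hentry : ∀ a a' : Fin 2, (coeffMat ψ * (coeffMat ψ).conjTranspose) a a'
        = v a * (starRingEnd ℂ) (v a') := by
      intro a a'
      rw [Matrix.mul_apply]
      rw [Finset.sum_eq_single (⟨d-1, hdlt⟩ : Fin d)]
      · simp only [Matrix.conjTranspose_apply, coeffMat, Matrix.of_apply, Complex.star_def,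
          hform, if_pos rfl, if_true]
      · intro b _ hb
        have : ¬ ((b:ℕ) = d - 1) := fun h => hb (Fin.ext h)
        simp [Matrix.conjTranspose_apply, coeffMat, hform, this]
      · simp
    have h00 : v 0 * (starRingEnd ℂ) (v 0) = 1/2 := by
      rw [← hentry 0 0, hMM]; simp [Matrix.one_apply]
    have h11 : v 1 * (starRingEnd ℂ) (v 1) = 1/2 := by
      rw [← hentry 1 1, hMM]; simp [Matrix.one_apply]
    have h01 : v 0 * (starRingEnd ℂ) (v 1) = 0 := by
      rw [← hentry 0 1, hMM]; simp [Matrix.one_apply]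
    rcases mul_eq_zero.mp h01 with h | h
    · rw [h, zero_mul] at h00; norm_num at h00
    · rw [h, mul_zero] at h11; norm_num at h11
end
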